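/- In a finite tree (connected acyclic graph) that is bipartite with parts P and Z, such that every leaf lies in P, the center of the tree consists of a single vertex. -/

import Mathlib

/-!
Take a diametral pair `a, b`. Each of `a, b` is farthest from the other, and a vertex farthest
from another vertex of a tree is a leaf (all its neighbours are one step closer, and in a tree
only one neighbour can be). So `a` and `b` are leaves, hence both lie in `P` and `d(a, b) = 2r`
is even. The midpoint of the `a`–`b` path has eccentricity at most `r`, while every vertex has
eccentricity at least `r` by the triangle inequality; and a vertex at distance at most `r` from
both `a` and `b` lies on the unique `a`–`b` path at distance `r` from `a`, so it is the midpoint.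
-/

open Finset

namespace SimpleGraph

variable {V : Type*} {G : SimpleGraph V}

lemma Walk.dist_add_dist_of_mem_support {u v w : V} {p : G.Walk u v}
    (hp : p.length = G.dist u v) (hw : w ∈ p.support) :
    G.dist u w + G.dist w v = G.dist u v := by
  classical
  rw [← length_eq_dist_of_subwalk hp (p.isSubwalk_takeUntil hw),
    ← length_eq_dist_of_subwalk hp (p.isSubwalk_dropUntil hw), ← Walk.length_append,
    p.take_spec hw, hp]

namespace IsTree

lemma getVert_dist_eq_of_dist_add_dist (hG : G.IsTree) {a b z : V} {p : G.Walk a b}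
    (hp : p.IsPath) (h : G.dist a z + G.dist z b = G.dist a b) :
    p.getVert (G.dist a z) = z := by
  obtain ⟨q, hq⟩ := hG.connected.exists_walk_length_eq_dist a z
  obtain ⟨r, hr⟩ := hG.connected.exists_walk_length_eq_dist z b
  have hqr : (q.append r).IsPath := (q.append r).isPath_of_length_eq_dist (by simp [hq, hr, h])
  have hpqr : p = q.append r :=
    congrArg Subtype.val (hG.isAcyclic.subsingleton_path a b |>.elim ⟨p, hp⟩ ⟨_, hqr⟩)
  simp [hpqr, ← hq, Walk.getVert_append']

lemma dist_add_dist_eq_or_of_mem_support (hG : G.IsTree) {a b w : V} {p : G.Walk a b}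
    (hp : p.IsPath) (hw : w ∈ p.support) (u : V) :
    G.dist u w + G.dist w a = G.dist u a ∨ G.dist u w + G.dist w b = G.dist u b := by
  classical
  obtain ⟨q, hq⟩ := hG.connected.exists_walk_length_eq_dist u a
  obtain ⟨r, hr⟩ := hG.connected.exists_walk_length_eq_dist u b
  have hp_eq : p = (q.reverse.append r).bypass :=
    congrArg Subtype.val
      (hG.isAcyclic.subsingleton_path a b |>.elim ⟨p, hp⟩ ⟨_, Walk.bypass_isPath _⟩)
  have hw' : w ∈ (q.reverse.append r).support :=
    Walk.support_bypass_subset_support _ (hp_eq ▸ hw)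
  rw [Walk.mem_support_append_iff, Walk.support_reverse, List.mem_reverse] at hw'
  exact hw'.imp (Walk.dist_add_dist_of_mem_support hq) (Walk.dist_add_dist_of_mem_support hr)

lemma degree_eq_one_of_forall_dist_le (hG : G.IsTree) {z u : V} [Fintype (G.neighborSet u)]
    (hzu : z ≠ u) (hmax : ∀ x, G.dist z x ≤ G.dist z u) : G.degree u = 1 := by
  obtain ⟨p, hp, hplen⟩ := hG.connected.exists_path_of_dist z u
  have hnil : ¬p.Nil := Walk.not_nil_of_ne hzu
  rw [degree_eq_one_iff_existsUnique_adj]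
  refine ⟨p.penultimate, (p.adj_penultimate hnil).symm, fun y hy => ?_⟩
  have hcloser : G.dist z u = G.dist z y + 1 := by
    have := hmax y
    have := hG.dist_eq_dist_add_one_of_adj z hy
    omega
  have hy_dist : G.dist z y + G.dist y u = G.dist z u := by
    rw [dist_eq_one_iff_adj.mpr hy.symm, hcloser]
  rw [Walk.penultimate, hplen, hcloser, Nat.add_sub_cancel,
    hG.getVert_dist_eq_of_dist_add_dist hp hy_dist]

lemma existsUnique_forall_dist_le (hG : G.IsTree) {a b : V} {r : ℕ}
    (hab : ∀ x y, G.dist x y ≤ G.dist a b) (hr : G.dist a b = 2 * r) :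
    ∃! w, ∀ u, G.dist w u ≤ r := by
  obtain ⟨p, hp, hplen⟩ := hG.connected.exists_path_of_dist a b
  have hw : p.getVert r ∈ p.support := p.getVert_mem_support r
  have haw : G.dist a (p.getVert r) = r := by
    rw [← length_eq_dist_of_subwalk hplen (p.isSubwalk_take r), Walk.take_length]
    omega
  have hwb := Walk.dist_add_dist_of_mem_support hplen hw
  refine ⟨p.getVert r, fun u => ?_, fun z hz => ?_⟩
  · have := hab u a
    have := hab u b
    rw [dist_comm]
    rcases hG.dist_add_dist_eq_or_of_mem_support hp hw u with h | h
    · rw [dist_comm (u := p.getVert r)] at h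
      omega
    · omega
  · have := hz b
    have := hz a
    rw [dist_comm] at this
    have := hG.connected.dist_triangle (u := a) (v := z) (w := b)
    have haz : G.dist a z = r := by omega
    rw [← haz, hG.getVert_dist_eq_of_dist_add_dist hp (by omega)]

end IsTree

lemma Connected.le_sup_dist_of_dist_eq_two_mul [Fintype V] (hG : G.Connected) {a b : V} {r : ℕ}
    (hr : G.dist a b = 2 * r) (v : V) : r ≤ univ.sup fun u => G.dist v u := by
  have := le_sup (f := fun u => G.dist v u) (mem_univ a)
  have := le_sup (f := fun u => G.dist v u) (mem_univ b)
  have := hG.dist_triangle (u := a) (v := v) (w := b)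
  rw [dist_comm (u := a) (v := v)] at this
  omega

end SimpleGraph

theorem stmt13_general {V : Type*} [Fintype V] (G : SimpleGraph V)
    [DecidableRel G.Adj]
    (hconn : G.Connected) (hacyclic : G.IsAcyclic)
    (c : V → Bool) (hc : ∀ u v, G.Adj u v → c u ≠ c v)
    (hleaf : ∀ v, G.degree v = 1 → c v = true) :
    ∃! z : V, ∀ v : V,
      (Finset.univ.sup fun u => G.dist z u) ≤ Finset.univ.sup fun u => G.dist v u := by
  rcases subsingleton_or_nontrivial V with hV | hV
  · exact ⟨hconn.nonempty.some, fun v => by rw [Subsingleton.elim v hconn.nonempty.some],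
      fun _ _ => Subsingleton.elim _ _⟩
  have hG : G.IsTree := ⟨hconn, hacyclic⟩
  have hfin := SimpleGraph.connected_iff_ediam_ne_top.mp hconn
  obtain ⟨a, b, hdiam⟩ := G.exists_dist_eq_diam
  have hab : ∀ x y, G.dist x y ≤ G.dist a b := fun x y => hdiam ▸ G.dist_le_diam hfin
  have hne : a ≠ b := by
    rintro rfl
    exact G.diam_ne_zero_of_ediam_ne_top hfin (by simpa using hdiam.symm)
  have hPa := hleaf a <| hG.degree_eq_one_of_forall_dist_le hne.symm fun x =>
    (hab b x).trans_eq SimpleGraph.dist_comm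
  have hPb := hleaf b <| hG.degree_eq_one_of_forall_dist_le hne fun x => hab a x
  obtain ⟨r, hr⟩ : Even (G.dist a b) := by
    obtain ⟨p, hp⟩ := hconn.exists_walk_length_eq_dist a b
    rw [← hp, (SimpleGraph.Coloring.mk c fun h => hc _ _ h).even_length_iff_congr]
    exact iff_of_true hPa hPb
  replace hr : G.dist a b = 2 * r := by omega
  obtain ⟨w, hw, hw_unique⟩ := hG.existsUnique_forall_dist_le hab hr
  have hecc_w : (univ.sup fun u => G.dist w u) ≤ r := Finset.sup_le fun u _ => hw u
  exact ⟨w, fun v => hecc_w.trans (hconn.le_sup_dist_of_dist_eq_two_mul hr v),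
    fun z hz => hw_unique z fun u => (le_sup (mem_univ u)).trans ((hz w).trans hecc_w)⟩

/-- In a finite tree which is properly 2-colored (bipartite, with part `P`
being the vertices colored `true` and part `Z` those colored `false`) and in
which every leaf (degree-1 vertex) lies in `P`, the center of the tree (the
set of vertices of minimal eccentricity) consists of a single vertex. -/
theorem stmt13 {V : Type*} [Fintype V] [Nonempty V] (G : SimpleGraph V)
    [DecidableRel G.Adj]
    (hconn : G.Connected) (hacyclic : G.IsAcyclic)
    (c : V → Bool) (hc : ∀ u v, G.Adj u v → c u ≠ c v)
    (hleaf : ∀ v, G.degree v = 1 → c v = true) :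
    ∃! z : V, ∀ v : V,
      (Finset.univ.sup fun u => G.dist z u) ≤ Finset.univ.sup fun u => G.dist v u :=
  stmt13_general G hconn hacyclic c hc hleaf
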